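/- (Precision monotonicity of the three-valued valuation) For every pair of biworlds w, w' with w ≤_p w' and every formula φ of the language COEL, the three-valued value satisfies φ^w ≤_p φ^{w'}, where on truth values u ≤_p f and u ≤_p t. -/

import Mathlib

/-! Induction on the formula. Restriction preserves the objective interpretation, and `¬`, `∧`,
`E_G`, `C_G` are monotone for `≤ₚ` argumentwise, so the work lies in `K_A` and `M_A`, handled by
induction on the depths of `w ≤ₚ w'`. Between successor depths, `A^w` is the image of `A^{w'}`
under restriction, so the two glbs range over pairwise `≤ₚ`-related values. If `w` has limit depth,
every component `(w)_α` is below `w'`. If `w` has successor depth and `w'` limit depth, `w` is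
itself a component of `w'`; the components of `w'` form a `≤ₚ`-chain, so their values are
comparable with the value at `w`, which is therefore below their lub. -/

open Ordinal

/-- Three truth values: true, false, unknown. -/
inductive TV : Type
  | t | f | u
deriving DecidableEq

namespace TV

/-- Inverse of a truth value. -/
def inv : TV → TV
  | t => f
  | f => t
  | u => u

/-- Binary greatest lower bound in the truth order f ≤ₜ u ≤ₜ t. -/
def tmin : TV → TV → TV
  | f, _ => f
  | _, f => f
  | u, _ => u
  | _, u => u
  | t, t => t

/-- Truth value of a proposition. -/
noncomputable def ofProp (p : Prop) : TV := by
  classical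
  exact if p then t else f

/-- Greatest lower bound of a set of truth values in the truth order f ≤ₜ u ≤ₜ t. -/
noncomputable def tglbSet (s : Set TV) : TV := by
  classical
  exact if f ∈ s then f else if u ∈ s then u else t

/-- Least upper bound of a (chain) set of truth values in the precision order
u ≤ₚ t, u ≤ₚ f. -/
noncomputable def plubSet (s : Set TV) : TV := by
  classical
  exact if t ∈ s then t else if f ∈ s then f else u

/-- Precision order on truth values: u below everything. -/
def ple (a b : TV) : Prop := a = u ∨ a = b

end TV

/-- Formulas of the language COEL. -/
inductive Form (Agent Atom : Type) : Type
  | atom : Atom → Form Agent Atom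
  | neg : Form Agent Atom → Form Agent Atom
  | and : Form Agent Atom → Form Agent Atom → Form Agent Atom
  | K : Agent → Form Agent Atom → Form Agent Atom
  | M : Agent → Form Agent Atom → Form Agent Atom
  | E : Set Agent → Form Agent Atom → Form Agent Atom
  | C : Set Agent → Form Agent Atom → Form Agent Atom

/-- Iterated `E_G` operator: `Eiter G 0 φ = φ`, `Eiter G (k+1) φ = E_G (Eiter G k φ)`. -/
def Form.Eiter {Agent Atom : Type} (G : Set Agent) : ℕ → Form Agent Atom → Form Agent Atom
  | 0, φ => φ
  | k + 1, φ => .E G (Form.Eiter G k φ)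

/-- Modal depth of a COEL formula. -/
noncomputable def Form.MD {Agent Atom : Type} : Form Agent Atom → Ordinal.{0}
  | .atom _ => 0
  | .neg φ => φ.MD
  | .and φ ψ => max φ.MD ψ.MD
  | .K _ φ => φ.MD + 1
  | .M _ φ => φ.MD + 1
  | .E _ φ => φ.MD + 1
  | .C _ φ => φ.MD + omega0

/-- A system of prebiworlds over agents `Agent` and propositional vocabulary `Atom`,
packaging the transfinite construction of μ-prebiworlds for all countable ordinals μ,
together with the recursive equations defining restriction. -/
structure PrebSys (Agent Atom : Type) where
  /-- the collection of all prebiworlds (of all depths) -/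
  W : Type 1
  /-- the depth of a prebiworld -/
  depth : W → Ordinal.{0}
  depth_countable : ∀ w, (depth w).card ≤ Cardinal.aleph0
  /-- the objective interpretation of a prebiworld -/
  obj : W → Set Atom
  /-- for a (μ+1)-prebiworld, the set A^w of μ-prebiworlds deemed (extendibly) possible -/
  poss : Agent → W → Set W
  /-- for a (μ+1)-prebiworld, the set Ā^w of μ-prebiworlds deemed (extendibly) impossible -/
  imposs : Agent → W → Set W
  /-- for a limit-depth prebiworld, its component (w)_α at α < depth w -/
  comp : W → Ordinal.{0} → W
  /-- the restriction w|_α of w to depth α ≤ depth w -/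
  restrict : W → Ordinal.{0} → W
  depth_poss : ∀ (A : Agent) (w v : W), v ∈ poss A w → depth w = depth v + 1
  depth_imposs : ∀ (A : Agent) (w v : W), v ∈ imposs A w → depth w = depth v + 1
  depth_comp : ∀ (w : W) (α : Ordinal.{0}), Order.IsSuccLimit (depth w) → α < depth w →
    depth (comp w α) = α
  comp_mono : ∀ (w : W) (α β : Ordinal.{0}), Order.IsSuccLimit (depth w) → α ≤ β → β < depth w →
    restrict (comp w β) α = comp w α
  ext_zero : ∀ w w' : W, depth w = 0 → depth w' = 0 → obj w = obj w' → w = w'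
  ext_succ : ∀ (w w' : W) (μ : Ordinal.{0}), depth w = μ + 1 → depth w' = μ + 1 →
    obj w = obj w' → (∀ A, poss A w = poss A w') → (∀ A, imposs A w = imposs A w') → w = w'
  ext_limit : ∀ w w' : W, Order.IsSuccLimit (depth w) → depth w' = depth w →
    (∀ α < depth w, comp w α = comp w' α) → w = w'
  depth_restrict : ∀ (w : W) (α : Ordinal.{0}), α ≤ depth w → depth (restrict w α) = α
  restrict_zero : ∀ w : W, obj (restrict w 0) = obj w
  restrict_limit : ∀ (w : W) (α β : Ordinal.{0}), Order.IsSuccLimit α → α ≤ depth w → β < α →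
    comp (restrict w α) β = restrict w β
  restrict_succ_limit : ∀ (w : W) (α : Ordinal.{0}), Order.IsSuccLimit (depth w) →
    α + 1 ≤ depth w → restrict w (α + 1) = comp w (α + 1)
  restrict_succ_obj : ∀ (w : W) (μ α : Ordinal.{0}), depth w = μ + 1 → α + 1 ≤ depth w →
    obj (restrict w (α + 1)) = obj w
  restrict_succ_poss : ∀ (w : W) (μ α : Ordinal.{0}) (A : Agent), depth w = μ + 1 →
    α + 1 ≤ depth w →
    poss A (restrict w (α + 1)) = (fun v => restrict v α) '' poss A w
  restrict_succ_imposs : ∀ (w : W) (μ α : Ordinal.{0}) (A : Agent), depth w = μ + 1 →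
    α + 1 ≤ depth w →
    imposs A (restrict w (α + 1)) = (fun v => restrict v α) '' imposs A w

/-- The precision order: v ≤ₚ w iff w restricted to the depth of v equals v. -/
def PrebSys.lep {Agent Atom : Type} (S : PrebSys Agent Atom) (v w : S.W) : Prop :=
  S.depth v ≤ S.depth w ∧ S.restrict w (S.depth v) = v

/-- A system of biworlds: prebiworlds together with the simultaneously
(transfinite-recursively) defined predicates `Biworld` and `Incompleted`
and their defining clauses. -/
structure BiSys (Agent Atom : Type) extends PrebSys Agent Atom where
  Biworld : W → Prop
  Incompleted : W → Prop
  biworld_zero : ∀ w : W, depth w = 0 → Biworld w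
  biworld_succ : ∀ (w : W) (μ : Ordinal.{0}), depth w = μ + 1 →
    (Biworld w ↔ ∀ A : Agent,
      poss A w ∪ imposs A w = {v | depth v = μ ∧ Biworld v} ∧
      ∀ v ∈ poss A w ∩ imposs A w, Incompleted v)
  biworld_limit : ∀ w : W, Order.IsSuccLimit (depth w) →
    (Biworld w ↔ ∀ α < depth w, Biworld (comp w α))
  incompleted_iff : ∀ w : W, Incompleted w ↔
    ∃ v₁ v₂ : W, v₁ ≠ v₂ ∧ Biworld v₁ ∧ Biworld v₂ ∧
      depth v₁ = depth w + 1 ∧ depth v₂ = depth w + 1 ∧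
      PrebSys.lep toPrebSys w v₁ ∧ PrebSys.lep toPrebSys w v₂

/-- A biworld is completed if it is not incompleted. -/
def BiSys.Completed {Agent Atom : Type} (S : BiSys Agent Atom) (w : S.W) : Prop :=
  ¬ S.Incompleted w

/-- For a limit-depth prebiworld w, the set A↑w. -/
def BiSys.upPoss {Agent Atom : Type} (S : BiSys Agent Atom) (A : Agent) (w : S.W) :
    Set S.W :=
  {v | S.depth v = S.depth w ∧ ∀ α < S.depth w, S.comp v α ∈ S.poss A (S.comp w (α + 1))}

/-- For a limit-depth prebiworld w, the set Ā↑w. -/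
def BiSys.upImposs {Agent Atom : Type} (S : BiSys Agent Atom) (A : Agent) (w : S.W) :
    Set S.W :=
  {v | S.depth v = S.depth w ∧ ∀ α < S.depth w, S.comp v α ∈ S.imposs A (S.comp w (α + 1))}

/-- A system of biworlds together with the three-valued valuation of COEL formulas
and its defining equations. -/
structure ValSys (Agent Atom : Type) extends BiSys Agent Atom where
  val : Form Agent Atom → W → TV
  val_atom : ∀ (P : Atom) (w : W), val (.atom P) w = TV.ofProp (P ∈ obj w)
  val_neg : ∀ (φ : Form Agent Atom) (w : W), val (.neg φ) w = (val φ w).inv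
  val_and : ∀ (φ ψ : Form Agent Atom) (w : W),
    val (.and φ ψ) w = (val φ w).tmin (val ψ w)
  val_K_zero : ∀ (A : Agent) (φ : Form Agent Atom) (w : W), depth w = 0 →
    val (.K A φ) w = TV.u
  val_K_succ : ∀ (A : Agent) (φ : Form Agent Atom) (w : W) (μ : Ordinal.{0}),
    depth w = μ + 1 → val (.K A φ) w = TV.tglbSet (val φ '' poss A w)
  val_K_limit : ∀ (A : Agent) (φ : Form Agent Atom) (w : W), Order.IsSuccLimit (depth w) →
    val (.K A φ) w = TV.plubSet {x | ∃ α < depth w, x = val (.K A φ) (comp w α)}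
  val_M_zero : ∀ (A : Agent) (φ : Form Agent Atom) (w : W), depth w = 0 →
    val (.M A φ) w = TV.u
  val_M_succ : ∀ (A : Agent) (φ : Form Agent Atom) (w : W) (μ : Ordinal.{0}),
    depth w = μ + 1 →
    val (.M A φ) w = TV.tglbSet ((fun v => (val φ v).inv) '' imposs A w)
  val_M_limit : ∀ (A : Agent) (φ : Form Agent Atom) (w : W), Order.IsSuccLimit (depth w) →
    val (.M A φ) w = TV.plubSet {x | ∃ α < depth w, x = val (.M A φ) (comp w α)}
  val_E : ∀ (G : Set Agent) (φ : Form Agent Atom) (w : W),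
    val (.E G φ) w = TV.tglbSet {x | ∃ A ∈ G, x = val (.K A φ) w}
  val_C : ∀ (G : Set Agent) (φ : Form Agent Atom) (w : W),
    val (.C G φ) w = TV.tglbSet {x | ∃ k : ℕ, 1 ≤ k ∧ x = val (Form.Eiter G k φ) w}

/-- A world: a completed (ω²+1)-biworld. -/
def ValSys.World {Agent Atom : Type} (S : ValSys Agent Atom) (w : S.W) : Prop :=
  S.Biworld w ∧ S.depth w = omega0 ^ 2 + 1 ∧ S.toBiSys.Completed w

/-- Accessibility in the canonical Kripke structure K*: w R_A w' iff w'|_{ω²} ∈ A^w. -/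
def ValSys.Racc {Agent Atom : Type} (S : ValSys Agent Atom) (A : Agent)
    (w w' : S.W) : Prop :=
  S.restrict w' (omega0 ^ 2) ∈ S.poss A w

/-- Two-valued Kripke valuation on the canonical Kripke structure K* of worlds. -/
def ValSys.kval {Agent Atom : Type} (S : ValSys Agent Atom) :
    Form Agent Atom → S.W → Prop
  | .atom P, w => P ∈ S.obj w
  | .neg φ, w => ¬ S.kval φ w
  | .and φ ψ, w => S.kval φ w ∧ S.kval ψ w
  | .K A φ, w => ∀ w', S.World w' → S.Racc A w w' → S.kval φ w'
  | .M A φ, w => ∀ w', S.World w' → S.kval φ w' → S.Racc A w w'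
  | .E G φ, w => ∀ A ∈ G, ∀ w', S.World w' → S.Racc A w w' → S.kval φ w'
  | .C G φ, w => ∀ w', Relation.TransGen (fun x y => S.World y ∧ ∃ A ∈ G, S.Racc A x y) w w' →
      S.kval φ w'

namespace TV

theorem ple_refl (a : TV) : ple a a := Or.inr rfl

theorem u_ple (a : TV) : ple u a := Or.inl rfl

theorem ple.inv {a b : TV} (h : ple a b) : ple a.inv b.inv := by
  cases a <;> cases b <;> simp_all [ple, TV.inv]

theorem ple.tmin {a b c d : TV} (hab : ple a b) (hcd : ple c d) :
    ple (a.tmin c) (b.tmin d) := by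
  cases a <;> cases b <;> cases c <;> cases d <;> simp_all [ple, TV.tmin]

theorem ple_tglbSet {ι : Type*} {P : ι → Prop} {p q : ι → TV}
    (h : ∀ i, P i → ple (p i) (q i)) :
    ple (tglbSet {x | ∃ i, P i ∧ x = p i}) (tglbSet {x | ∃ i, P i ∧ x = q i}) := by
  unfold tglbSet
  split_ifs <;> grind [ple]

theorem ple_tglbSet_image {ι : Type*} {s : Set ι} {p q : ι → TV}
    (h : ∀ i ∈ s, ple (p i) (q i)) : ple (tglbSet (p '' s)) (tglbSet (q '' s)) := by
  simpa only [Set.image, eq_comm] using ple_tglbSet h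

theorem plubSet_ple {s : Set TV} {b : TV} (h : ∀ x ∈ s, ple x b) : ple (plubSet s) b := by
  unfold plubSet
  split_ifs with ht hf
  exacts [h t ht, h f hf, u_ple b]

theorem ple_plubSet {s : Set TV} {a : TV} (ha : a ∈ s) (h : ∀ x ∈ s, ple a x ∨ ple x a) :
    ple a (plubSet s) := by
  unfold plubSet
  cases a with
  | u => exact u_ple _
  | t => simp [ha, ple_refl]
  | f =>
    have ht : t ∉ s := fun ht => by simpa [ple] using h t ht
    simp [ha, ht, ple_refl]

end TV

theorem Ordinal.eq_zero_or_eq_add_one_or_isSuccLimit (o : Ordinal) :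
    o = 0 ∨ (∃ a, o = a + 1) ∨ Order.IsSuccLimit o := by
  rcases Ordinal.zero_or_succ_or_isSuccLimit o with h | ⟨a, rfl⟩ | h
  exacts [Or.inl h, Or.inr (Or.inl ⟨a, Order.succ_eq_add_one a⟩), Or.inr (Or.inr h)]

namespace PrebSys

variable {Agent Atom : Type} (S : PrebSys Agent Atom)

theorem lep_restrict {w : S.W} {α : Ordinal} (hα : α ≤ S.depth w) : S.lep (S.restrict w α) w :=
  ⟨(S.depth_restrict w α hα).symm ▸ hα, by rw [S.depth_restrict w α hα]⟩

theorem comp_lep_comp {w : S.W} (hl : Order.IsSuccLimit (S.depth w)) {α β : Ordinal}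
    (hαβ : α ≤ β) (hβ : β < S.depth w) : S.lep (S.comp w α) (S.comp w β) := by
  refine ⟨?_, ?_⟩ <;> rw [S.depth_comp w α hl (hαβ.trans_lt hβ)]
  · rwa [S.depth_comp w β hl hβ]
  · exact S.comp_mono w α β hl hαβ hβ

theorem comp_eq_restrict_of_lep {v w : S.W} (hl : Order.IsSuccLimit (S.depth v))
    (hvw : S.lep v w) {α : Ordinal} (hα : α < S.depth v) : S.comp v α = S.restrict w α := by
  conv_lhs => rw [← hvw.2]
  exact S.restrict_limit w _ α hl hvw.1 hα

theorem comp_lep_of_lep {v w : S.W} (hl : Order.IsSuccLimit (S.depth v)) (hvw : S.lep v w)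
    {α : Ordinal} (hα : α < S.depth v) : S.lep (S.comp v α) w := by
  rw [S.comp_eq_restrict_of_lep hl hvw hα]
  exact S.lep_restrict (hα.le.trans hvw.1)

theorem eq_comp_of_lep {v w : S.W} (hl : Order.IsSuccLimit (S.depth w)) (hvw : S.lep v w)
    {μ : Ordinal} (hv : S.depth v = μ + 1) : v = S.comp w (μ + 1) := by
  conv_lhs => rw [← hvw.2, hv]
  exact S.restrict_succ_limit w μ hl (hv ▸ hvw.1)

theorem restrict_zero_eq_comp_zero {w : S.W} (hl : Order.IsSuccLimit (S.depth w)) :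
    S.restrict w 0 = S.comp w 0 := by
  -- the components of `w|_{depth w}` are the restrictions `w|_β`; compare them at `0` and `1`
  have h1 : (0 : Ordinal) + 1 < S.depth w := by
    rw [zero_add]; exact Ordinal.one_lt_of_isSuccLimit hl
  have hv : Order.IsSuccLimit (S.depth (S.restrict w (S.depth w))) := by
    rwa [S.depth_restrict w _ le_rfl]
  have key := S.comp_mono _ 0 (0 + 1) hv zero_le (by rwa [S.depth_restrict w _ le_rfl])
  rw [S.restrict_limit w _ _ hl le_rfl h1, S.restrict_limit w _ _ hl le_rfl hl.pos,
    S.restrict_succ_limit w 0 hl h1.le, S.comp_mono w 0 (0 + 1) hl zero_le h1] at key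
  exact key.symm

theorem obj_comp {w : S.W} (hl : Order.IsSuccLimit (S.depth w)) {α : Ordinal}
    (hα : α < S.depth w) : S.obj (S.comp w α) = S.obj w := by
  rw [← S.restrict_zero (S.comp w α), S.comp_mono w 0 α hl zero_le hα,
    ← S.restrict_zero_eq_comp_zero hl, S.restrict_zero]

theorem obj_restrict (w : S.W) {α : Ordinal} (hα : α ≤ S.depth w) :
    S.obj (S.restrict w α) = S.obj w := by
  obtain rfl | ⟨γ, rfl⟩ | hαl := Ordinal.eq_zero_or_eq_add_one_or_isSuccLimit α
  · exact S.restrict_zero w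
  · obtain hw | ⟨μ, hw⟩ | hwl := Ordinal.eq_zero_or_eq_add_one_or_isSuccLimit (S.depth w)
    · simp [hw] at hα
    · exact S.restrict_succ_obj w μ γ hw hα
    · have hlt : γ + 1 < S.depth w :=
        hα.lt_of_ne fun h => Order.not_isSuccLimit_add_one γ (h ▸ hwl)
      rw [S.restrict_succ_limit w γ hwl hα, S.obj_comp hwl hlt]
  · have hl : Order.IsSuccLimit (S.depth (S.restrict w α)) := by rwa [S.depth_restrict w α hα]
    rw [← S.obj_comp hl hl.pos, S.restrict_limit w α 0 hαl hα hαl.pos, S.restrict_zero]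

end PrebSys

namespace BiSys

variable {Agent Atom : Type}

def PrecisionMonotone (S : BiSys Agent Atom) (g : S.W → TV) : Prop :=
  ∀ ⦃v v' : S.W⦄, S.Biworld v → S.Biworld v' → S.lep v v' → TV.ple (g v) (g v')

theorem PrecisionMonotone.inv {S : BiSys Agent Atom} {g : S.W → TV}
    (hg : S.PrecisionMonotone g) : S.PrecisionMonotone fun v => (g v).inv :=
  fun _ _ hb hb' hle => (hg hb hb' hle).inv

/-- The recursion shared by `K_A φ` (with `R = A^·`, `g = φ^·`) and `M_A φ`
(with `R = Ā^·`, `g = (φ^·)⁻¹`). -/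
structure IsModalValuation (S : BiSys Agent Atom) (R : S.W → Set S.W) (g F : S.W → TV) :
    Prop where
  restrict_succ : ∀ (w : S.W) (μ α : Ordinal), S.depth w = μ + 1 → α + 1 ≤ S.depth w →
    R (S.restrict w (α + 1)) = (fun v => S.restrict v α) '' R w
  subset_biworld : ∀ (w : S.W) (μ : Ordinal), S.depth w = μ + 1 → S.Biworld w →
    R w ⊆ {v | S.depth v = μ ∧ S.Biworld v}
  val_zero : ∀ w, S.depth w = 0 → F w = TV.u
  val_succ : ∀ (w : S.W) (μ : Ordinal), S.depth w = μ + 1 → F w = TV.tglbSet (g '' R w)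
  val_limit : ∀ w, Order.IsSuccLimit (S.depth w) →
    F w = TV.plubSet {x | ∃ α < S.depth w, x = F (S.comp w α)}

namespace IsModalValuation

variable {S : BiSys Agent Atom} {R : S.W → Set S.W} {g F : S.W → TV}

theorem ple_of_succ (hF : S.IsModalValuation R g F) (hg : S.PrecisionMonotone g)
    {w w' : S.W} {μ ν : Ordinal} (hw : S.depth w = μ + 1) (hw' : S.depth w' = ν + 1)
    (hb : S.Biworld w) (hb' : S.Biworld w') (hle : S.lep w w') : TV.ple (F w) (F w') := by
  have hμ : μ + 1 ≤ S.depth w' := hw ▸ hle.1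
  have hμν : μ ≤ ν := Order.le_of_lt_add_one (Order.add_one_le_iff.1 (hw' ▸ hμ))
  have hR : R w = (fun v => S.restrict v μ) '' R w' := by
    conv_lhs => rw [← hle.2, hw]
    exact hF.restrict_succ w' ν μ hw' hμ
  rw [hF.val_succ w μ hw, hF.val_succ w' ν hw', hR, Set.image_image]
  refine TV.ple_tglbSet_image fun v' hv' => ?_
  obtain ⟨hdv', hbv'⟩ := hF.subset_biworld w' ν hw' hb' hv'
  have hbv : S.Biworld (S.restrict v' μ) :=
    (hF.subset_biworld w μ hw hb (hR ▸ Set.mem_image_of_mem _ hv')).2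
  exact hg hbv hbv' (S.lep_restrict (hdv' ▸ hμν))

theorem ple_of_isSuccLimit_left (hF : S.IsModalValuation R g F) {w w' : S.W}
    (hl : Order.IsSuccLimit (S.depth w)) (h : ∀ α < S.depth w, TV.ple (F (S.comp w α)) (F w')) :
    TV.ple (F w) (F w') := by
  rw [hF.val_limit w hl]
  exact TV.plubSet_ple fun _ ⟨α, hα, hx⟩ => hx ▸ h α hα

theorem comp_ple (hF : S.IsModalValuation R g F) {w : S.W} (hl : Order.IsSuccLimit (S.depth w))
    {γ : Ordinal} (hγ : γ < S.depth w)
    (h : ∀ β < S.depth w, TV.ple (F (S.comp w γ)) (F (S.comp w β)) ∨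
      TV.ple (F (S.comp w β)) (F (S.comp w γ))) :
    TV.ple (F (S.comp w γ)) (F w) := by
  rw [hF.val_limit w hl]
  exact TV.ple_plubSet ⟨γ, hγ, rfl⟩ fun _ ⟨β, hβ, hx⟩ => hx ▸ h β hβ

theorem precisionMonotone (hF : S.IsModalValuation R g F) (hg : S.PrecisionMonotone g) :
    S.PrecisionMonotone F := by
  suffices ∀ μ δ w w', S.depth w = μ → S.depth w' = δ → S.Biworld w → S.Biworld w' →
      S.lep w w' → TV.ple (F w) (F w') from fun w w' => this _ _ w w' rfl rfl
  intro μ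
  induction μ using WellFoundedLT.induction with | ind μ ihμ =>
  intro δ
  induction δ using WellFoundedLT.induction with | ind δ ihδ =>
  intro w w' hμ hδ hb hb' hle
  obtain hw | ⟨μ₀, hw⟩ | hwl := Ordinal.eq_zero_or_eq_add_one_or_isSuccLimit (S.depth w)
  · rw [hF.val_zero w hw]
    exact TV.u_ple _
  · obtain hw' | ⟨ν₀, hw'⟩ | hw'l := Ordinal.eq_zero_or_eq_add_one_or_isSuccLimit (S.depth w')
    · simpa [hw, hw'] using hle.1
    · exact hF.ple_of_succ hg hw hw' hb hb' hle
    · have hlt : μ₀ + 1 < S.depth w' :=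
        hw ▸ hle.1.lt_of_ne fun h => Order.not_isSuccLimit_add_one μ₀ (hw ▸ h ▸ hw'l)
      have hwc := S.eq_comp_of_lep hw'l hle hw
      subst hwc
      refine hF.comp_ple hw'l hlt fun β hβ => ?_
      have hdβ := S.depth_comp w' β hw'l hβ
      have hbβ := (S.biworld_limit w' hw'l).1 hb' β hβ
      rcases le_or_gt (μ₀ + 1) β with hγβ | hβγ
      · exact .inl (ihδ β (hδ ▸ hβ) _ _ hμ hdβ hb hbβ (S.comp_lep_comp hw'l hγβ hβ))
      · exact .inr (ihμ β (by rwa [← hμ, hw]) _ _ _ hdβ rfl hbβ hb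
          (S.comp_lep_comp hw'l hβγ.le hlt))
  · exact hF.ple_of_isSuccLimit_left hwl fun α hα =>
      ihμ α (hμ ▸ hα) _ _ w' (S.depth_comp w α hwl hα) rfl ((S.biworld_limit w hwl).1 hb α hα)
        hb' (S.comp_lep_of_lep hwl hle hα)

end IsModalValuation

end BiSys

namespace ValSys

variable {Agent Atom : Type} (S : ValSys Agent Atom)

theorem isModalValuation_K (A : Agent) (φ : Form Agent Atom) :
    S.IsModalValuation (S.poss A) (S.val φ) (S.val (.K A φ)) where
  restrict_succ w μ α := S.restrict_succ_poss w μ α A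
  subset_biworld w μ hw hb := ((S.biworld_succ w μ hw).1 hb A).1 ▸ Set.subset_union_left
  val_zero w := S.val_K_zero A φ w
  val_succ w μ := S.val_K_succ A φ w μ
  val_limit w := S.val_K_limit A φ w

theorem isModalValuation_M (A : Agent) (φ : Form Agent Atom) :
    S.IsModalValuation (S.imposs A) (fun v => (S.val φ v).inv) (S.val (.M A φ)) where
  restrict_succ w μ α := S.restrict_succ_imposs w μ α A
  subset_biworld w μ hw hb := ((S.biworld_succ w μ hw).1 hb A).1 ▸ Set.subset_union_right
  val_zero w := S.val_M_zero A φ w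
  val_succ w μ := S.val_M_succ A φ w μ
  val_limit w := S.val_M_limit A φ w

theorem precisionMonotone_atom (P : Atom) : S.PrecisionMonotone (S.val (.atom P)) := by
  intro w w' _ _ hle
  rw [S.val_atom, S.val_atom, ← hle.2, S.obj_restrict w' hle.1]
  exact TV.ple_refl _

variable {S}

theorem precisionMonotone_neg {φ : Form Agent Atom} (h : S.PrecisionMonotone (S.val φ)) :
    S.PrecisionMonotone (S.val (.neg φ)) :=
  funext (S.val_neg φ) ▸ h.inv

theorem precisionMonotone_and {φ ψ : Form Agent Atom} (hφ : S.PrecisionMonotone (S.val φ))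
    (hψ : S.PrecisionMonotone (S.val ψ)) : S.PrecisionMonotone (S.val (.and φ ψ)) := by
  intro w w' hb hb' hle
  rw [S.val_and, S.val_and]
  exact (hφ hb hb' hle).tmin (hψ hb hb' hle)

theorem precisionMonotone_K (A : Agent) {φ : Form Agent Atom}
    (h : S.PrecisionMonotone (S.val φ)) : S.PrecisionMonotone (S.val (.K A φ)) :=
  (S.isModalValuation_K A φ).precisionMonotone h

theorem precisionMonotone_M (A : Agent) {φ : Form Agent Atom}
    (h : S.PrecisionMonotone (S.val φ)) : S.PrecisionMonotone (S.val (.M A φ)) :=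
  (S.isModalValuation_M A φ).precisionMonotone h.inv

theorem precisionMonotone_E (G : Set Agent) {φ : Form Agent Atom}
    (h : S.PrecisionMonotone (S.val φ)) : S.PrecisionMonotone (S.val (.E G φ)) := by
  intro w w' hb hb' hle
  rw [S.val_E, S.val_E]
  exact TV.ple_tglbSet fun A _ => precisionMonotone_K A h hb hb' hle

theorem precisionMonotone_Eiter (G : Set Agent) {φ : Form Agent Atom}
    (h : S.PrecisionMonotone (S.val φ)) (k : ℕ) : S.PrecisionMonotone (S.val (φ.Eiter G k)) := by
  induction k with
  | zero => exact h
  | succ k ih => exact precisionMonotone_E G ih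

theorem precisionMonotone_C (G : Set Agent) {φ : Form Agent Atom}
    (h : S.PrecisionMonotone (S.val φ)) : S.PrecisionMonotone (S.val (.C G φ)) := by
  intro w w' hb hb' hle
  rw [S.val_C, S.val_C]
  exact TV.ple_tglbSet fun k _ => precisionMonotone_Eiter G h k hb hb' hle

variable (S)

theorem precisionMonotone_val (φ : Form Agent Atom) : S.PrecisionMonotone (S.val φ) := by
  induction φ with
  | atom P => exact S.precisionMonotone_atom P
  | neg φ ih => exact precisionMonotone_neg ih
  | and φ ψ ihφ ihψ => exact precisionMonotone_and ihφ ihψ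
  | K A φ ih => exact precisionMonotone_K A ih
  | M A φ ih => exact precisionMonotone_M A ih
  | E G φ ih => exact precisionMonotone_E G ih
  | C G φ ih => exact precisionMonotone_C G ih

end ValSys

/-- Precision monotonicity of the three-valued valuation. -/
theorem val_precision_mono {Agent Atom : Type} (S : ValSys Agent Atom) (w w' : S.W)
    (hb : S.Biworld w) (hb' : S.Biworld w') (hle : S.toPrebSys.lep w w')
    (φ : Form Agent Atom) :
    TV.ple (S.val φ w) (S.val φ w') :=
  S.precisionMonotone_val φ hb hb' hle
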